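/- arXiv:1107.4709 — 2 statements merged into one kernel-verified Lean document; each statement's English description precedes it below -/
import Mathlib

section
/- Let m ≤ n be nonnegative integers. Let f : F_2^n × F_2^d → F_2^r be a strong lossless (m, ε)-condenser such that f(·, u) is F_2-linear for every seed u ∈ F_2^d, and let g : F_2^n × F_2^{d'} → F_2^k be a strong (n−m, ε')-extractor such that g(·, u) is F_2-linear and surjective for every seed u ∈ F_2^{d'}; for u ∈ F_2^{d'} let G_u denote the k×n matrix of g(·, u), so that g(x, u) = x·G_uᵀ. Then for every set S ⊆ [n] of size at most m: (1) for all but at most 5ε·2^d seeds u ∈ F_2^d, the linear code C_u := {x ∈ F_2^n : f(x, u) = 0} contains no nonzero codeword whose support lies inside S (so every codeword of C_u is uniquely determined by its coordinates outside S); and (2) for all but at most 5ε'·2^{d'} seeds u ∈ F_2^{d'}, the map sending x ∈ F_2^k to the restriction of x·G_u to the coordinates outside S is injective. -/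
/-- Statistical distance between two distributions on a finite set. -/
noncomputable def statDist {Ω : Type*} [Fintype Ω] (p q : Ω → ℝ) : ℝ :=
  (∑ x, |p x - q x|) / 2

/-- `p` is a probability distribution on a finite set. -/
def IsDist {Ω : Type*} [Fintype Ω] (p : Ω → ℝ) : Prop :=
  (∀ x, 0 ≤ p x) ∧ (∑ x, p x) = 1

/-- `p` has min-entropy at least `b` (bits). -/
def minEntropyGe {Ω : Type*} [Fintype Ω] (p : Ω → ℝ) (b : ℝ) : Prop :=
  ∀ x, p x ≤ (2 : ℝ) ^ (-b)

/-- The uniform distribution on a finite type. -/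
noncomputable def unif (Ω : Type*) [Fintype Ω] : Ω → ℝ :=
  fun _ => (Fintype.card Ω : ℝ)⁻¹

/-- Joint distribution of `(Z, f(X, Z))` where `X ∼ p` and `Z` is uniform. -/
noncomputable def jointDist {A S B : Type*} [Fintype A] [Fintype S] [DecidableEq B]
    (p : A → ℝ) (f : A → S → B) : S × B → ℝ :=
  fun sb => (Fintype.card S : ℝ)⁻¹ * ∑ x, if f x sb.1 = sb.2 then p x else 0

/-- Strong `(k, ε)`-extractor. -/
def IsStrongExtractor {A S B : Type*} [Fintype A] [Fintype S] [Fintype B] [DecidableEq B]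
    (f : A → S → B) (k ε : ℝ) : Prop :=
  ∀ p : A → ℝ, IsDist p → minEntropyGe p k →
    statDist (jointDist p f) (unif (S × B)) ≤ ε

/-- Strong `k →_ε k'` condenser. -/
def IsStrongCondenser {A S B : Type*} [Fintype A] [Fintype S] [Fintype B] [DecidableEq B]
    (f : A → S → B) (k k' ε : ℝ) : Prop :=
  ∀ p : A → ℝ, IsDist p → minEntropyGe p k →
    ∃ q : S × B → ℝ, IsDist q ∧
      minEntropyGe q (Real.logb 2 (Fintype.card S) + k') ∧
      statDist (jointDist p f) q ≤ ε

/-! If `f(·, u)` kills a nonzero vector supported in `S`, take `X` uniform on the `2 ^ m` vectors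
supported in a superset `S' ⊇ S` of size `m`: then `f(X, u)` takes at most `2 ^ (m - 1)` values,
each of mass at most `2 ^ (-m) / |U|` under any target of min-entropy `log |U| + m`, so row `u`
contributes at least `1 / (2 |U|)` to twice the statistical distance, and there are at most
`4 ε |U|` such seeds. Dually, if `x ↦ (x G_u)|_{Sᶜ}` is not injective, some `y ≠ 0` has
`y G_u` vanishing off `S`; for `X` uniform on the vectors vanishing on `S` (min-entropy
`n - |S| ≥ n - m`) the output `G_u X` lies in the hyperplane `y⊥`, and the same count applies
against the uniform distribution. -/

open Finset Matrix

section Concentration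

variable {A S B : Type*} [Fintype A] [Fintype S]

lemma sum_jointDist_eq_inv_card [DecidableEq B] {p : A → ℝ} (hp : IsDist p) {f : A → S → B}
    {u : S} {D : Finset B} (hD : ∀ x, p x ≠ 0 → f x u ∈ D) :
    ∑ b ∈ D, jointDist p f (u, b) = (Fintype.card S : ℝ)⁻¹ := by
  have hfiber : ∀ x, ∑ b ∈ D, (if f x u = b then p x else 0) = p x := by
    intro x
    rw [sum_ite_eq]
    by_cases hx : p x = 0
    · simp [hx]
    · simp [hD x hx]
  simp only [jointDist]
  rw [← mul_sum, sum_comm, sum_congr rfl fun x _ => hfiber x, hp.2, mul_one]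

lemma inv_card_sub_le_sum_abs_sub [Fintype B] [DecidableEq B] {p : A → ℝ} (hp : IsDist p)
    {f : A → S → B} {u : S} {D : Finset B} (hD : ∀ x, p x ≠ 0 → f x u ∈ D)
    {q : S × B → ℝ} {c : ℝ}
    (hq : ∀ z, q z ≤ c) :
    (Fintype.card S : ℝ)⁻¹ - #D * c ≤ ∑ b, |jointDist p f (u, b) - q (u, b)| := by
  have hqD : ∑ b ∈ D, q (u, b) ≤ #D * c := by
    simpa using sum_le_card_nsmul D (fun b => q (u, b)) c fun b _ => hq (u, b)
  calc (Fintype.card S : ℝ)⁻¹ - #D * c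
      ≤ ∑ b ∈ D, (jointDist p f (u, b) - q (u, b)) := by
        rw [sum_sub_distrib, sum_jointDist_eq_inv_card hp hD]; linarith
    _ ≤ ∑ b ∈ D, |jointDist p f (u, b) - q (u, b)| := sum_le_sum fun b _ => le_abs_self _
    _ ≤ ∑ b, |jointDist p f (u, b) - q (u, b)| :=
        sum_le_sum_of_subset_of_nonneg (subset_univ D) fun _ _ _ => abs_nonneg _

lemma card_mul_le_of_statDist_le [Fintype B] {j q : S × B → ℝ} {ε c : ℝ}
    (hjq : statDist j q ≤ ε) {T : Finset S}
    (hT : ∀ u ∈ T, c ≤ ∑ b, |j (u, b) - q (u, b)|) :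
    #T * c ≤ 2 * ε := by
  calc #T * c ≤ ∑ u ∈ T, ∑ b, |j (u, b) - q (u, b)| := by
        simpa using card_nsmul_le_sum T _ c hT
    _ ≤ ∑ u, ∑ b, |j (u, b) - q (u, b)| :=
        sum_le_sum_of_subset_of_nonneg (subset_univ T) fun _ _ _ => by positivity
    _ = 2 * statDist j q := by
        rw [statDist, Fintype.sum_prod_type]; ring
    _ ≤ 2 * ε := by linarith

theorem card_le_of_statDist_le_of_concentrated [Fintype B] [DecidableEq B] {p : A → ℝ}
    (hp : IsDist p) {f : A → S → B} {q : S × B → ℝ} {N : ℕ}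
    (hq : ∀ z, q z ≤ ((Fintype.card S : ℝ) * N)⁻¹) {ε : ℝ}
    (hpq : statDist (jointDist p f) q ≤ ε) {T : Finset S}
    (hT : ∀ u ∈ T, ∃ D : Finset B, (∀ x, p x ≠ 0 → f x u ∈ D) ∧ 2 * #D ≤ N) :
    (#T : ℝ) ≤ 4 * ε * Fintype.card S := by
  have hrow : ∀ u ∈ T, (2 * Fintype.card S : ℝ)⁻¹
      ≤ ∑ b, |jointDist p f (u, b) - q (u, b)| := by
    intro u hu
    obtain ⟨D, hD, hDN⟩ := hT u hu
    have hS : (0 : ℝ) < Fintype.card S := by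
      have : Nonempty S := ⟨u⟩
      exact_mod_cast Fintype.card_pos
    have hDN' : (#D : ℝ) * ((Fintype.card S : ℝ) * N)⁻¹
        ≤ (2 * Fintype.card S : ℝ)⁻¹ := by
      rcases Nat.eq_zero_or_pos N with hN | hN
      · simp [hN]
      · have hDN : (2 * #D : ℝ) ≤ N := by exact_mod_cast hDN
        rw [← div_eq_mul_inv, div_le_iff₀ (by positivity)]
        calc (#D : ℝ) ≤ N / 2 := by linarith
          _ = (2 * Fintype.card S : ℝ)⁻¹ * (Fintype.card S * N) := by field_simp
    have hhalf : (Fintype.card S : ℝ)⁻¹ = 2 * (2 * Fintype.card S : ℝ)⁻¹ := by field_simp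
    linarith [inv_card_sub_le_sum_abs_sub hp hD hq (u := u)]
  have hcount := card_mul_le_of_statDist_le hpq hrow
  rcases (Fintype.card S).eq_zero_or_pos with hS | hS
  · have hT0 : #T = 0 := Nat.eq_zero_of_le_zero (hS ▸ card_le_univ T)
    simp [hT0, hS]
  · rw [← div_eq_mul_inv, div_le_iff₀ (by positivity)] at hcount
    linarith

end Concentration

open Classical in
noncomputable def unifOn {A : Type*} (V : Set A) : A → ℝ :=
  fun x => if x ∈ V then (Nat.card V : ℝ)⁻¹ else 0

section UniformOn

variable {A : Type*} {V : Set A}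

lemma mem_of_unifOn_ne_zero {x : A} (hx : unifOn V x ≠ 0) : x ∈ V := by
  by_contra h
  simp [unifOn, h] at hx

variable [Fintype A]

lemma isDist_unifOn (hV : V.Nonempty) : IsDist (unifOn V) := by
  classical
  refine ⟨fun x => by unfold unifOn; split <;> positivity, ?_⟩
  have hcard : Nat.card V = #{x | x ∈ V} := by
    rw [Nat.card_eq_fintype_card, Fintype.card_subtype]
  have hpos : (0 : ℝ) < Nat.card V := by
    have := hV.to_subtype
    exact_mod_cast Nat.card_pos
  simp only [unifOn]
  rw [← sum_filter, sum_const, nsmul_eq_mul, ← hcard]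
  field_simp

lemma minEntropyGe_unifOn {b : ℝ} (hb : (2 : ℝ) ^ b ≤ Nat.card V) :
    minEntropyGe (unifOn V) b := by
  intro x
  rw [Real.rpow_neg zero_le_two]
  unfold unifOn
  split
  · exact inv_anti₀ (by positivity) hb
  · positivity

end UniformOn

lemma le_inv_of_minEntropyGe {Ω : Type*} [Fintype Ω] {q : Ω → ℝ} {x : ℝ} (hx : 0 < x)
    {m : ℕ} (hq : minEntropyGe q (Real.logb 2 x + m)) (z : Ω) : q z ≤ (x * 2 ^ m)⁻¹ := by
  calc q z ≤ (2 : ℝ) ^ (-(Real.logb 2 x + m)) := hq z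
    _ = (x * 2 ^ m)⁻¹ := by
      rw [Real.rpow_neg zero_le_two, Real.rpow_add zero_lt_two, Real.rpow_logb zero_lt_two
        (by norm_num) hx, Real.rpow_natCast]

lemma two_mul_card_range_le {M N : Type*} [AddGroup M] [Finite M] [AddGroup N] (φ : M →+ N)
    {x : M} (hx : x ≠ 0) (hφx : φ x = 0) : 2 * Nat.card φ.range ≤ Nat.card M := by
  have : Nontrivial φ.ker := (AddSubgroup.nontrivial_iff_exists_ne_zero _).2 ⟨x, hφx, hx⟩
  rw [← φ.ker.card_mul_index, AddSubgroup.index_ker]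
  exact Nat.mul_le_mul_right _ Finite.one_lt_card

lemma card_mul_card_dotProduct_eq_zero {F κ : Type*} [Field F] [Fintype F] [DecidableEq F]
    [Fintype κ] [DecidableEq κ] {y : κ → F} (hy : y ≠ 0) :
    Fintype.card F * #{b | y ⬝ᵥ b = 0} = Fintype.card F ^ Fintype.card κ := by
  let φ : (κ → F) →+ F := ⟨⟨(y ⬝ᵥ ·), dotProduct_zero y⟩, dotProduct_add y⟩
  have hφ : Function.Surjective φ := by
    obtain ⟨i, hi⟩ := Function.ne_iff.mp hy
    intro c
    refine ⟨Pi.single i ((y i)⁻¹ * c), ?_⟩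
    change y ⬝ᵥ _ = c
    rw [dotProduct_single, ← mul_assoc, mul_inv_cancel₀ hi, one_mul]
  have hker : #{b | y ⬝ᵥ b = 0} = Nat.card φ.ker := by
    rw [← Fintype.card_subtype, ← Nat.card_eq_fintype_card]
    exact Nat.card_congr (Equiv.subtypeEquivRight fun b => by simp [φ])
  rw [hker, mul_comm, ← Fintype.card_fun, ← Nat.card_eq_fintype_card (α := κ → F),
    ← φ.ker.card_mul_index, AddSubgroup.index_ker, AddMonoidHom.range_eq_top.2 hφ,
    Nat.card_congr AddSubgroup.topEquiv.toEquiv, Nat.card_eq_fintype_card (α := F)]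

lemma card_pi_compl_bot {ι R : Type*} [Fintype ι] [AddGroup R] [Finite R] (T : Finset ι) :
    Nat.card (AddSubgroup.pi (↑T)ᶜ fun _ : ι => (⊥ : AddSubgroup R)) = Nat.card R ^ #T := by
  classical
  let e : AddSubgroup.pi (↑T)ᶜ (fun _ : ι => (⊥ : AddSubgroup R)) ≃ (T → R) :=
    { toFun := fun x i => x.1 i
      invFun := fun y => ⟨fun i => if h : i ∈ T then y ⟨i, h⟩ else 0, by
        simp +contextual [AddSubgroup.mem_pi]⟩
      left_inv := fun x => Subtype.ext <| funext fun i => by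
        by_cases h : i ∈ T
        · simp [h]
        · simpa [h, eq_comm] using (AddSubgroup.mem_pi _).1 x.2 i h
      right_inv := fun y => funext fun i => by simp }
  rw [Nat.card_congr e, Nat.card_fun, Nat.card_eq_finsetCard]

theorem card_not_erasure_decodable_le_of_isStrongCondenser {ι U B : Type*} [Fintype ι]
    [DecidableEq ι] [Fintype U] [Fintype B] [DecidableEq B] [AddCommGroup B] [Module (ZMod 2) B]
    {m : ℕ} (hm : m ≤ Fintype.card ι) {f : (ι → ZMod 2) → U → B} {ε : ℝ}
    (hf : IsStrongCondenser f m m ε) (hflin : ∀ u, IsLinearMap (ZMod 2) (fun x => f x u))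
    {S : Finset ι} (hS : #S ≤ m) {T : Finset U}
    (hT : ∀ u ∈ T, ∃ x : ι → ZMod 2, f x u = 0 ∧ (∀ i ∉ S, x i = 0) ∧ x ≠ 0) :
    (#T : ℝ) ≤ 4 * ε * Fintype.card U := by
  classical
  rcases isEmpty_or_nonempty U with _ | _
  · simp [eq_empty_of_isEmpty T]
  obtain ⟨S', hSS', hS'⟩ := exists_superset_card_eq hS hm
  set W := AddSubgroup.pi (↑S')ᶜ fun _ : ι => (⊥ : AddSubgroup (ZMod 2))
  have hW : Nat.card (W : Set (ι → ZMod 2)) = 2 ^ m := by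
    rw [← hS']
    exact (card_pi_compl_bot S').trans (by rw [Nat.card_zmod])
  have hmin : minEntropyGe (unifOn (W : Set (ι → ZMod 2))) m :=
    minEntropyGe_unifOn (by rw [hW, Real.rpow_natCast]; push_cast; rfl)
  obtain ⟨q, -, hq, hpq⟩ := hf _ (isDist_unifOn ⟨0, W.zero_mem⟩) hmin
  have hU : (0 : ℝ) < Fintype.card U := by exact_mod_cast Fintype.card_pos
  refine card_le_of_statDist_le_of_concentrated (isDist_unifOn ⟨0, W.zero_mem⟩) (N := 2 ^ m)
    (by exact_mod_cast le_inv_of_minEntropyGe hU hq) hpq fun u hu => ?_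
  obtain ⟨x, hfx, hxS, hx⟩ := hT u hu
  let φ : W →+ B := (IsLinearMap.mk' _ (hflin u)).toAddMonoidHom.comp W.subtype
  have hxW : x ∈ W := (AddSubgroup.mem_pi _).2 fun i hi =>
    AddSubgroup.mem_bot.2 (hxS i fun hiS => hi (hSS' hiS))
  refine ⟨(φ.range : Set B).toFinset, fun y hy => ?_, ?_⟩
  · rw [Set.mem_toFinset]
    exact ⟨⟨y, mem_of_unifOn_ne_zero hy⟩, rfl⟩
  · rw [← Nat.card_eq_card_toFinset, ← hW]
    exact two_mul_card_range_le φ (x := ⟨x, hxW⟩) (by simpa using hx) hfx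

theorem card_not_injective_puncture_le_of_isStrongExtractor {ι κ U : Type*} [Fintype ι]
    [DecidableEq ι] [Fintype κ] [DecidableEq κ] [Fintype U] {G : U → Matrix κ ι (ZMod 2)}
    {m : ℕ} {ε : ℝ}
    (hg : IsStrongExtractor (fun x u => G u *ᵥ x) ((Fintype.card ι : ℝ) - m) ε)
    {S : Finset ι} (hS : #S ≤ m) {T : Finset U}
    (hT : ∀ u ∈ T,
      ¬ Function.Injective fun (x : κ → ZMod 2) (j : {j // j ∉ S}) => (x ᵥ* G u) j.1) :
    (#T : ℝ) ≤ 4 * ε * Fintype.card U := by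
  rcases isEmpty_or_nonempty U with _ | _
  · simp [eq_empty_of_isEmpty T]
  set W := AddSubgroup.pi (↑Sᶜ)ᶜ fun _ : ι => (⊥ : AddSubgroup (ZMod 2))
  have hW : Nat.card (W : Set (ι → ZMod 2)) = 2 ^ #Sᶜ :=
    (card_pi_compl_bot Sᶜ).trans (by rw [Nat.card_zmod])
  have hmin : minEntropyGe (unifOn (W : Set (ι → ZMod 2))) ((Fintype.card ι : ℝ) - m) := by
    refine minEntropyGe_unifOn ?_
    rw [hW, card_compl, Nat.cast_pow, Nat.cast_ofNat, ← Real.rpow_natCast,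
      Nat.cast_sub (card_le_univ S)]
    have hSm : (#S : ℝ) ≤ m := by exact_mod_cast hS
    exact Real.rpow_le_rpow_of_exponent_le one_le_two (by linarith)
  have hq : ∀ z, unif (U × (κ → ZMod 2)) z
      ≤ ((Fintype.card U : ℝ) * (2 ^ Fintype.card κ : ℕ))⁻¹ :=
    fun z => by simp [unif, Fintype.card_prod]
  refine card_le_of_statDist_le_of_concentrated (isDist_unifOn ⟨0, W.zero_mem⟩) hq
    (hg _ (isDist_unifOn ⟨0, W.zero_mem⟩) hmin) fun u hu => ?_
  obtain ⟨a, b, hab, hne⟩ := Function.not_injective_iff.mp (hT u hu)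
  have hy : a - b ≠ 0 := sub_ne_zero.mpr hne
  have hyG : ∀ j ∉ S, ((a - b) ᵥ* G u) j = 0 := fun j hj => by
    simpa [sub_vecMul, sub_eq_zero] using congrFun hab ⟨j, hj⟩
  refine ⟨({c | (a - b) ⬝ᵥ c = 0} : Finset _), fun x hx => ?_, ?_⟩
  · have hxS : ∀ j ∈ S, x j = 0 := fun j hj => AddSubgroup.mem_bot.1
      ((AddSubgroup.mem_pi _).1 (mem_of_unifOn_ne_zero hx) j (by simpa using hj))
    simp only [mem_filter, mem_univ, true_and]
    rw [dotProduct_mulVec]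
    refine sum_eq_zero fun j _ => ?_
    by_cases hj : j ∈ S
    · simp [hxS j hj]
    · simp [hyG j hj]
  · have := card_mul_card_dotProduct_eq_zero hy
    rw [ZMod.card] at this
    omega

open Classical in
theorem stmt17_general (n m dd dd' r k : ℕ) (hmn : m ≤ n)
    (f : (Fin n → ZMod 2) → (Fin dd → ZMod 2) → Fin r → ZMod 2)
    (ε : ℝ) (hf : IsStrongCondenser f (m : ℝ) (m : ℝ) ε)
    (hflin : ∀ u, IsLinearMap (ZMod 2) (fun x => f x u))
    (g : (Fin n → ZMod 2) → (Fin dd' → ZMod 2) → Fin k → ZMod 2)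
    (ε' : ℝ) (hg : IsStrongExtractor g ((n : ℝ) - (m : ℝ)) ε')
    (G : (Fin dd' → ZMod 2) → Matrix (Fin k) (Fin n) (ZMod 2))
    (hG : ∀ u x, g x u = Matrix.mulVec (G u) x) :
    ∀ S : Finset (Fin n), S.card ≤ m →
      (((Finset.univ.filter (fun u : Fin dd → ZMod 2 =>
          ¬ ∀ x : Fin n → ZMod 2, f x u = 0 → (∀ i ∉ S, x i = 0) → x = 0)).card : ℝ)
        ≤ 5 * ε * 2 ^ dd) ∧
      (((Finset.univ.filter (fun u : Fin dd' → ZMod 2 =>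
          ¬ Function.Injective (fun (x : Fin k → ZMod 2) =>
            fun j : {j // j ∉ S} => Matrix.vecMul x (G u) j.1))).card : ℝ)
        ≤ 5 * ε' * 2 ^ dd') := by
  intro S hS
  obtain rfl : g = fun x u => G u *ᵥ x := funext fun x => funext fun u => hG u x
  have relax : ∀ {t a : ℝ} {d : ℕ},
      0 ≤ t → t ≤ 4 * a * Fintype.card (Fin d → ZMod 2) → t ≤ 5 * a * 2 ^ d := by
    intro t a d ht h
    simp only [Fintype.card_fun, ZMod.card, Fintype.card_fin, Nat.cast_pow, Nat.cast_ofNat] at h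
    linarith
  exact ⟨relax (Nat.cast_nonneg _) <| card_not_erasure_decodable_le_of_isStrongCondenser
      (by simpa using hmn) hf hflin hS fun u hu => by simpa using hu,
    relax (Nat.cast_nonneg _) <| card_not_injective_puncture_le_of_isStrongExtractor
      (by simpa using hg) hS fun u hu => (mem_filter.1 hu).2⟩

open Classical in
/-- Linear lossless condensers give parity-check matrices, and linear
extractors give generator matrices, of codes correcting erasure patterns of size `≤ m`. -/
theorem stmt17 (n m dd dd' r k : ℕ) (hmn : m ≤ n)
    (f : (Fin n → ZMod 2) → (Fin dd → ZMod 2) → Fin r → ZMod 2)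
    (ε : ℝ) (hf : IsStrongCondenser f (m : ℝ) (m : ℝ) ε)
    (hflin : ∀ u, IsLinearMap (ZMod 2) (fun x => f x u))
    (g : (Fin n → ZMod 2) → (Fin dd' → ZMod 2) → Fin k → ZMod 2)
    (ε' : ℝ) (hg : IsStrongExtractor g ((n : ℝ) - (m : ℝ)) ε')
    (hglin : ∀ u, IsLinearMap (ZMod 2) (fun x => g x u))
    (hgsurj : ∀ u, Function.Surjective (fun x => g x u))
    (G : (Fin dd' → ZMod 2) → Matrix (Fin k) (Fin n) (ZMod 2))
    (hG : ∀ u x, g x u = Matrix.mulVec (G u) x) :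
    ∀ S : Finset (Fin n), S.card ≤ m →
      (((Finset.univ.filter (fun u : Fin dd → ZMod 2 =>
          ¬ ∀ x : Fin n → ZMod 2, f x u = 0 → (∀ i ∉ S, x i = 0) → x = 0)).card : ℝ)
        ≤ 5 * ε * 2 ^ dd) ∧
      (((Finset.univ.filter (fun u : Fin dd' → ZMod 2 =>
          ¬ Function.Injective (fun (x : Fin k → ZMod 2) =>
            fun j : {j // j ∉ S} => Matrix.vecMul x (G u) j.1))).card : ℝ)
        ≤ 5 * ε' * 2 ^ dd') :=
  stmt17_general n m dd dd' r k hmn f ε hf hflin g ε' hg G hG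
end

section
/- Let m ≤ n be nonnegative integers, let f : {0,1}^n × {0,1}^d → {0,1}^r be a strong lossless (m, ε)-condenser, and let Z be a flat distribution on {0,1}^n whose support has size exactly 2^m. Then for at least (1 − 2√ε)·2^d of the seeds u ∈ {0,1}^d, we have Pr_{z ∼ Z}[∃ z' ∈ supp(Z), z' ≠ z, f(z', u) = f(z, u)] ≤ √ε. (In particular, when f(·, u) is F_2-linear with matrix H_u, for every such seed u the error probability of syndrome decoding of the code {x : H_u·x = 0} over the additive-noise channel with noise distribution Z is at most √ε.) -/
/-! Let `N(u, b)` be the number of points of `A` that seed `u` maps to `b`. The source uniform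
on `A` makes `(Z, f(X, Z))` put mass `N(u, b) / (|S| 2^m)` on `(u, b)`, while any distribution of
min-entropy `log |S| + m` puts at most `1 / (|S| 2^m)` there; so `ε` bounds the total excess
`∑ (N(u, b) - 1) / (|S| 2^m)`. A colliding point lies in a fibre with `N ≥ 2`, where
`N ≤ 2 (N - 1)`, so the average number of collisions per seed is at most `2 ε 2^m`, and Markov's
inequality at threshold `√ε 2^m` leaves at most a `2 √ε` fraction of bad seeds. -/

open Finset

theorem statDist_eq_sum_posPart {Ω : Type*} [Fintype Ω] {p q : Ω → ℝ} (h : ∑ x, p x = ∑ x, q x) :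
    statDist p q = ∑ x, (p x - q x)⁺ := by
  have hsum : ∑ x, (p x - q x)⁺ = ∑ x, (p x - q x)⁻ := by
    rw [← sub_eq_zero, ← sum_sub_distrib]
    simp only [posPart_sub_negPart]
    rw [sum_sub_distrib, h, sub_self]
  unfold statDist
  simp only [← posPart_add_negPart, sum_add_distrib, ← hsum]
  ring

theorem minEntropyGe.le_inv_card_mul {S Ω : Type*} [Fintype S] [Nonempty S] [Fintype Ω]
    {q : Ω → ℝ} {k : ℝ} (hq : minEntropyGe q (Real.logb 2 (Fintype.card S) + k)) (x : Ω) :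
    q x ≤ (Fintype.card S : ℝ)⁻¹ * 2 ^ (-k) := by
  have hS : (0 : ℝ) < Fintype.card S := by exact_mod_cast Fintype.card_pos
  calc q x ≤ 2 ^ (-(Real.logb 2 (Fintype.card S) + k)) := hq x
    _ = (Fintype.card S : ℝ)⁻¹ * 2 ^ (-k) := by
      rw [neg_add, Real.rpow_add two_pos, Real.rpow_neg zero_le_two,
        Real.rpow_logb two_pos (by norm_num) hS]

section Flat

variable {α : Type*} [Fintype α] [DecidableEq α]

noncomputable def flatDist (X : Finset α) : α → ℝ :=
  fun x => if x ∈ X then (#X : ℝ)⁻¹ else 0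

theorem isDist_flatDist {X : Finset α} (hX : X.Nonempty) : IsDist (flatDist X) := by
  refine ⟨fun x => by unfold flatDist; positivity, ?_⟩
  simp [flatDist, sum_ite_mem, hX.card_pos.ne']

theorem minEntropyGe_flatDist {X : Finset α} {k : ℝ} (hX : (#X : ℝ) = 2 ^ k) :
    minEntropyGe (flatDist X) k := by
  intro x
  rw [Real.rpow_neg zero_le_two, ← hX]
  unfold flatDist
  split_ifs
  exacts [le_rfl, by positivity]

theorem jointDist_flatDist {S β : Type*} [Fintype S] [DecidableEq β] (X : Finset α)
    (f : α → S → β) (u : S) (b : β) :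
    jointDist (flatDist X) f (u, b) =
      (Fintype.card S : ℝ)⁻¹ * ((#{x ∈ X | f x u = b} : ℝ) / #X) := by
  simp only [jointDist, flatDist, ← ite_and, and_comm (a := f _ u = b), ← sum_filter,
    ← filter_filter, filter_univ_mem]
  simp [div_eq_mul_inv]

end Flat

theorem sum_jointDist {α S β : Type*} [Fintype α] [Fintype S] [Nonempty S] [Fintype β]
    [DecidableEq β] (p : α → ℝ) (f : α → S → β) :
    ∑ sb, jointDist p f sb = ∑ x, p x := by
  have hS : (Fintype.card S : ℝ) ≠ 0 := by exact_mod_cast Fintype.card_ne_zero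
  have hfib : ∀ u, ∑ b, ∑ x, (if f x u = b then p x else 0) = ∑ x, p x := fun u => by
    rw [sum_comm]
    simp
  simp only [jointDist, Fintype.sum_prod_type, ← mul_sum, hfib]
  simp [hS]

-- Truncated subtraction: an empty fibre contributes `0`, not `-1`.
theorem IsStrongCondenser.sum_card_fiber_sub_one_le {α S β : Type*} [Fintype α] [DecidableEq α]
    [Fintype S] [Nonempty S] [Fintype β] [DecidableEq β] {f : α → S → β} {k ε : ℝ}
    (hf : IsStrongCondenser f k k ε) {X : Finset α} (hX : (#X : ℝ) = 2 ^ k) :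
    ∑ u, ∑ b, ((#{x ∈ X | f x u = b} - 1 : ℕ) : ℝ) ≤ ε * (Fintype.card S * #X) := by
  have hXpos : (0 : ℝ) < #X := hX ▸ Real.rpow_pos_of_pos two_pos k
  have hS : (0 : ℝ) < Fintype.card S := by exact_mod_cast Fintype.card_pos
  have hflat := isDist_flatDist (card_pos.mp (by exact_mod_cast hXpos))
  obtain ⟨q, hq, hqent, hdist⟩ := hf (flatDist X) hflat (minEntropyGe_flatDist hX)
  set J := jointDist (flatDist X) f
  have hpoint : ∀ u b, ((#{x ∈ X | f x u = b} - 1 : ℕ) : ℝ) ≤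
      Fintype.card S * #X * (J (u, b) - q (u, b))⁺ := by
    intro u b
    have hqle : Fintype.card S * #X * q (u, b) ≤ 1 := by
      have hq_le := hqent.le_inv_card_mul (u, b)
      rw [Real.rpow_neg zero_le_two, ← hX] at hq_le
      calc Fintype.card S * #X * q (u, b)
          ≤ Fintype.card S * #X * ((Fintype.card S : ℝ)⁻¹ * (#X : ℝ)⁻¹) := by gcongr
        _ = 1 := by field_simp
    rcases Nat.eq_zero_or_pos #{x ∈ X | f x u = b} with hempty | hpos
    · rw [hempty, Nat.zero_sub, Nat.cast_zero]
      positivity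
    calc ((#{x ∈ X | f x u = b} - 1 : ℕ) : ℝ)
        ≤ Fintype.card S * #X * (J (u, b) - q (u, b)) := by
          simp only [Nat.cast_pred hpos, J, jointDist_flatDist]
          field_simp
          linarith
      _ ≤ Fintype.card S * #X * (J (u, b) - q (u, b))⁺ := by
          gcongr
          exact le_posPart _
  calc ∑ u, ∑ b, ((#{x ∈ X | f x u = b} - 1 : ℕ) : ℝ)
      ≤ ∑ u, ∑ b, Fintype.card S * #X * (J (u, b) - q (u, b))⁺ :=
        sum_le_sum fun u _ => sum_le_sum fun b _ => hpoint u b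
    _ = Fintype.card S * #X * statDist J q := by
        rw [statDist_eq_sum_posPart (by rw [sum_jointDist, hq.2, hflat.2]),
          Fintype.sum_prod_type, mul_sum]
        simp only [mul_sum]
    _ ≤ Fintype.card S * #X * ε := by gcongr
    _ = ε * (Fintype.card S * #X) := mul_comm _ _

theorem card_filter_exists_ne_eq_le_two_mul_sum {α β : Type*} [Fintype β] [DecidableEq β]
    (X : Finset α) (g : α → β) [DecidablePred fun z => ∃ z' ∈ X, z' ≠ z ∧ g z' = g z] :
    #{z ∈ X | ∃ z' ∈ X, z' ≠ z ∧ g z' = g z} ≤ 2 * ∑ b, (#{x ∈ X | g x = b} - 1) := by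
  rw [card_eq_sum_card_fiberwise (f := g) (t := univ) fun _ _ => mem_univ _, mul_sum]
  refine sum_le_sum fun b _ => ?_
  set C := {z ∈ X | ∃ z' ∈ X, z' ≠ z ∧ g z' = g z}
  rcases (C.filter (g · = b)).eq_empty_or_nonempty with hempty | ⟨z, hz⟩
  · simp [hempty]
  simp only [C, mem_filter] at hz
  obtain ⟨⟨hzX, z', hz'X, hne, hgz⟩, hgb⟩ := hz
  have htwo : 1 < #{x ∈ X | g x = b} := one_lt_card.mpr
    ⟨z', mem_filter.mpr ⟨hz'X, hgz.trans hgb⟩, z, mem_filter.mpr ⟨hzX, hgb⟩, hne⟩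
  have hsub : #(C.filter (g · = b)) ≤ #{x ∈ X | g x = b} :=
    card_le_card (filter_subset_filter _ (filter_subset _ _))
  omega

theorem card_sub_le_card_filter_le {ι : Type*} (s : Finset ι) {g : ι → ℝ}
    (hg : ∀ i ∈ s, 0 ≤ g i) {a t : ℝ} (ha : 0 ≤ a) (ht : 0 ≤ t)
    (hsum : ∑ i ∈ s, g i ≤ a * t) :
    (#s : ℝ) - a ≤ #{i ∈ s | g i ≤ t} := by
  have hsplit : (#{i ∈ s | g i ≤ t} : ℝ) + #{i ∈ s | ¬ g i ≤ t} = #s := by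
    exact_mod_cast card_filter_add_card_filter_not _
  suffices hbad : (#{i ∈ s | ¬ g i ≤ t} : ℝ) ≤ a by linarith
  rcases ht.eq_or_lt with rfl | htpos
  · have hzero :=
      (sum_eq_zero_iff_of_nonneg hg).1 (le_antisymm (by simpa using hsum) (sum_nonneg hg))
    rw [filter_false_of_mem fun i hi => not_not.2 (hzero i hi).le]
    simpa using ha
  · refine le_of_mul_le_mul_right ?_ htpos
    calc (#{i ∈ s | ¬ g i ≤ t} : ℝ) * t ≤ ∑ i ∈ s with ¬ g i ≤ t, g i := by
          rw [← nsmul_eq_mul]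
          exact card_nsmul_le_sum _ _ _ fun i hi => (not_le.mp (mem_filter.mp hi).2).le
      _ ≤ ∑ i ∈ s, g i := sum_le_sum_of_subset_of_nonneg (filter_subset _ _) fun i hi _ => hg i hi
      _ ≤ a * t := hsum

open Classical in
theorem stmt18_general (n dd r m : ℕ)
    (f : (Fin n → Bool) → (Fin dd → Bool) → Fin r → Bool)
    (ε : ℝ) (hf : IsStrongCondenser f (m : ℝ) (m : ℝ) ε)
    (A : Finset (Fin n → Bool)) (hA : A.card = 2 ^ m) :
    (1 - 2 * Real.sqrt ε) * 2 ^ dd ≤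
      ((Finset.univ.filter (fun u : Fin dd → Bool =>
        ((A.filter (fun z => ∃ z' ∈ A, z' ≠ z ∧ f z' u = f z u)).card : ℝ)
          ≤ Real.sqrt ε * 2 ^ m)).card : ℝ) := by
  have hexcess : ∑ u, ∑ b, ((#{x ∈ A | f x u = b} - 1 : ℕ) : ℝ) ≤ ε * (2 ^ dd * 2 ^ m) := by
    simpa [Fintype.card_fun, hA] using
      hf.sum_card_fiber_sub_one_le (X := A) (by rw [hA]; norm_cast)
  have hε : 0 ≤ ε := nonneg_of_mul_nonneg_left
    ((sum_nonneg fun _ _ => sum_nonneg fun _ _ => Nat.cast_nonneg _).trans hexcess) (by positivity)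
  have hcoll : ∑ u, (#{z ∈ A | ∃ z' ∈ A, z' ≠ z ∧ f z' u = f z u} : ℝ) ≤
      (2 * √ε * 2 ^ dd) * (√ε * 2 ^ m) :=
    calc ∑ u, (#{z ∈ A | ∃ z' ∈ A, z' ≠ z ∧ f z' u = f z u} : ℝ)
        ≤ ∑ u, 2 * ∑ b, ((#{x ∈ A | f x u = b} - 1 : ℕ) : ℝ) :=
          sum_le_sum fun u _ => by exact_mod_cast card_filter_exists_ne_eq_le_two_mul_sum A (f · u)
      _ ≤ 2 * (ε * (2 ^ dd * 2 ^ m)) := by rw [← mul_sum]; gcongr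
      _ = (2 * √ε * 2 ^ dd) * (√ε * 2 ^ m) := by
          linear_combination (-2 * 2 ^ dd * 2 ^ m : ℝ) * Real.mul_self_sqrt hε
  have hgood := card_sub_le_card_filter_le univ (fun u _ => Nat.cast_nonneg _)
    (by positivity) (by positivity) hcoll
  simp only [card_univ, Fintype.card_fun, Fintype.card_bool, Fintype.card_fin] at hgood
  push_cast at hgood
  linarith

open Classical in
/-- For most seeds of a strong lossless condenser, collisions on the
support of a flat source are rare. -/
theorem stmt18 (n dd r m : ℕ) (hmn : m ≤ n)
    (f : (Fin n → Bool) → (Fin dd → Bool) → Fin r → Bool)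
    (ε : ℝ) (hf : IsStrongCondenser f (m : ℝ) (m : ℝ) ε)
    (A : Finset (Fin n → Bool)) (hA : A.card = 2 ^ m) :
    (1 - 2 * Real.sqrt ε) * 2 ^ dd ≤
      ((Finset.univ.filter (fun u : Fin dd → Bool =>
        ((A.filter (fun z => ∃ z' ∈ A, z' ≠ z ∧ f z' u = f z u)).card : ℝ)
          ≤ Real.sqrt ε * 2 ^ m)).card : ℝ) :=
  stmt18_general n dd r m f ε hf A hA
end
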